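/- EoW brane screened by matter-brane states: in the chord-space model with 0<q<1, r ∈ ℝ, an integer k ≥ 1, nonzero complex α₁,…,α_k with |α_{i+1}|·|r|^i < |α₁| for 1 ≤ i ≤ k−1, and μ ∈ ℂ with |μ|·|r|^{k−1} < |α₁|, define for each m ∈ ℕ the function U_m on binary strings by U_m = Σ_{n=0}^{∞} ((μ·r^{k−1}/α₁)ⁿ/(q;q)_n) · V_m^{(qⁿα_k,…,qⁿα₁)} (the series converges absolutely at every string). Then, coordinatewise, H̃_{R,0} U_m = [m]_q·U_{m−1} + α₁·r·q^m·U_m + U_{m+1}, where H̃_{R,0} = a_{R,0} + a†_{R,0} + μW. Hence the EoW brane is completely screened by the dressed matter chords: H̃_{R,0} acts on the family (U_m) as if the brane tension were α₁·r. -/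

import Mathlib

namespace DSSYK

/-- Binary strings (chord words); the letter `0` is `false`, the letter `1` is `true`. -/
abbrev Str : Type := List Bool

/-- The chord space: finitely supported complex functions on binary strings. -/
abbrev Sp : Type := Str →₀ ℂ

/-- Crossing weights: `Q 0 0 = q`, `Q 1 1 = q_m`, mixed crossings give `r`. -/
def Qmat (q qm r : ℝ) : Bool → Bool → ℂ
  | false, false => (q : ℂ)
  | true,  true  => (qm : ℂ)
  | _,     _     => (r : ℂ)

/-- Right creation `a†_{R,i}`: append the letter `i` on the right. -/
noncomputable def creR (i : Bool) : Sp →ₗ[ℂ] Sp :=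
  Finsupp.lift Sp ℂ Str fun w => Finsupp.single (w ++ [i]) 1

/-- Value of the right annihilation operator on a basis string: delete one letter
equal to `i`, weighted by the crossing factors with all letters to its right. -/
noncomputable def annVecR (Q : Bool → Bool → ℂ) (i : Bool) : Str → Sp
  | [] => 0
  | x :: t =>
      (if x = i then ((t.map (Q i)).prod) • Finsupp.single t (1 : ℂ) else 0)
        + Finsupp.mapDomain (List.cons x) (annVecR Q i t)

/-- Right annihilation `a_{R,i}`. -/
noncomputable def annR (Q : Bool → Bool → ℂ) (i : Bool) : Sp →ₗ[ℂ] Sp :=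
  Finsupp.lift Sp ℂ Str (annVecR Q i)

/-- Left creation `a†_{L,i}`: prepend the letter `i`. -/
noncomputable def creL (i : Bool) : Sp →ₗ[ℂ] Sp :=
  Finsupp.lift Sp ℂ Str fun w => Finsupp.single (i :: w) 1

/-- Value of the left annihilation operator on a basis string: delete one letter
equal to `i`, weighted by the crossing factors with all letters to its left. -/
noncomputable def annVecL (Q : Bool → Bool → ℂ) (i : Bool) : Str → Sp
  | [] => 0
  | x :: t =>
      (if x = i then Finsupp.single t (1 : ℂ) else 0)
        + Q i x • Finsupp.mapDomain (List.cons x) (annVecL Q i t)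

/-- Left annihilation `a_{L,i}`. -/
noncomputable def annL (Q : Bool → Bool → ℂ) (i : Bool) : Sp →ₗ[ℂ] Sp :=
  Finsupp.lift Sp ℂ Str (annVecL Q i)

/-- Diagonal weight operator `δ_w ↦ c₀^{N₀(w)} · c₁^{N₁(w)} · δ_w`, where `N₀, N₁`
count the `0`'s and `1`'s in `w`. -/
noncomputable def Wgen (c₀ c₁ : ℂ) : Sp →ₗ[ℂ] Sp :=
  Finsupp.lift Sp ℂ Str fun w =>
    Finsupp.single w (c₀ ^ (w.count false) * c₁ ^ (w.count true))

/-- The chord-counting weight operator `W δ_w = q^{N₀(w)} r^{N₁(w)} δ_w`. -/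
noncomputable def Wop (q r : ℝ) : Sp →ₗ[ℂ] Sp := Wgen (q : ℂ) (r : ℂ)

/-- Right boundary operators `H_{R,i} = a_{R,i} + a†_{R,i}`. -/
noncomputable def HR (Q : Bool → Bool → ℂ) (i : Bool) : Sp →ₗ[ℂ] Sp := annR Q i + creR i

/-- Left boundary operators `H_{L,i} = a_{L,i} + a†_{L,i}`. -/
noncomputable def HL (Q : Bool → Bool → ℂ) (i : Bool) : Sp →ₗ[ℂ] Sp := annL Q i + creL i

/-- The vacuum `ω = δ_{[]}` (the empty string). -/
noncomputable def vac : Sp := Finsupp.single [] 1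

/-- `ε v = v([])`, the coefficient of the empty string. -/
def eps (v : Sp) : ℂ := v []

end DSSYK

namespace DSSYK

/-- The q-integer `[n]_q = (1 − qⁿ)/(1 − q)` (as a complex number). -/
noncomputable def qIntC (q : ℝ) (n : ℕ) : ℂ := (1 - (q : ℂ) ^ n) / (1 - (q : ℂ))

/-- The q-factorial `[n]!_q = Π_{j=1}^{n} [j]_q` (as a complex number). -/
noncomputable def qFactC (q : ℝ) (n : ℕ) : ℂ := ∏ j ∈ Finset.range n, qIntC q (j + 1)

/-- The q-Pochhammer symbol `(q;q)_n = Π_{j=0}^{n−1}(1 − q^{j+1})` (as a complex number). -/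
noncomputable def qPochQC (q : ℝ) (n : ℕ) : ℂ := ∏ j ∈ Finset.range n, (1 - (q : ℂ) ^ (j + 1))

/-- The infinite q-Pochhammer symbol `(x;q)_∞ = Π_{j=0}^{∞}(1 − x qʲ)`. -/
noncomputable def qPochInfC (q : ℝ) (x : ℂ) : ℂ := ∏' j : ℕ, (1 - x * (q : ℂ) ^ j)

end DSSYK

namespace DSSYK

/-- Coordinatewise (transpose) extension of an operator `T` on the chord space to
arbitrary coefficient functions on binary strings:
`(T f)(u) = Σ_w T_{u,w} f(w)`, where `T_{u,w}` is the coefficient of `δ_u` in `T δ_w`. -/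
noncomputable def coordAct (T : Sp →ₗ[ℂ] Sp) (f : Str → ℂ) : Str → ℂ :=
  fun u => ∑' w : Str, (T (Finsupp.single w 1)) u * f w

/-- The string `0^{n_k} 1 0^{n_{k−1}} 1 ⋯ 0^{n_1} 1 0^m` (recursion in `k`). -/
def braneString (ns : ℕ → ℕ) (m : ℕ) : ℕ → Str
  | 0 => List.replicate m false
  | k + 1 => List.replicate (ns (k + 1)) false ++ true :: braneString ns m k

/-- The coefficient of the `k`-matter brane state on the string with zero-block
lengths `n_k, …, n_1` (and final block `m`):
`(Π_{i=1}^{k} α_i^{n_i}/[n_i]!_q) · Π_{i=1}^{k−1} ((α_{i+1} rᶦ q^{n_1+⋯+n_i}/α₁; q)_∞)⁻¹`. -/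
noncomputable def braneCoeff (q r : ℝ) (α : ℕ → ℂ) (k : ℕ) (ns : ℕ → ℕ) : ℂ :=
  (∏ i ∈ Finset.Icc 1 k, α i ^ ns i / qFactC q (ns i)) *
    ∏ i ∈ Finset.Icc 1 (k - 1),
      (qPochInfC q
        (α (i + 1) * (r : ℂ) ^ i * (q : ℂ) ^ (∑ j ∈ Finset.Icc 1 i, ns j) / α 1))⁻¹

open Classical in
/-- The `k`-matter brane state `V_m^{(α_k,…,α₁)}`, as a coefficient function on binary
strings: supported on strings `0^{n_k} 1 0^{n_{k−1}} 1 ⋯ 0^{n_1} 1 0^m`, where it takes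
the value `braneCoeff`. -/
noncomputable def braneState (q r : ℝ) (α : ℕ → ℂ) (k m : ℕ) (w : Str) : ℂ :=
  if h : ∃ ns : ℕ → ℕ, w = braneString ns m k then braneCoeff q r α k h.choose else 0

end DSSYK

/-!
Only strings with `k` ones carry `U_m`, and these are exactly the strings
`0^{n_k} 1 ⋯ 0^{n_1} 1 0^{m'}`. On such a string the transposed annihilator inserts a `0` into one
of the zero blocks (into block `i` with total weight `[n_i + 1]_q rⁱ q^{m' + n_1 + ⋯ + n_{i-1}}`),
the transposed creator deletes the final `0`, and `W` multiplies by `q^{n_1 + ⋯ + n_k + m'} rᵏ`.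
So only `m' ∈ {m - 1, m, m + 1}` contribute, and the cases `m' = m ± 1` are immediate.

For `m' = m`, write `x_j = α_{j+1} rʲ q^{n_1 + ⋯ + n_j} / α₁`. Since
`(x; q)_∞ = (1 - x) (qx; q)_∞`, raising `n_{i+1}` multiplies the brane coefficient by
`α_{i+1} ∏_{j>i} (1 - x_j) / [n_{i+1} + 1]_q`, and `∑_{i<k} x_i ∏_{j>i} (1 - x_j) = 1` because
`x_0 = 1`. Summing over `n`, `U_m` is the brane coefficient times the q-exponential
`e_q(z) = ∑ zⁿ/(q;q)_n` at `z = μ r^{k-1} q^{n_1 + ⋯ + n_k} / α₁`. The inserted zero replaces `z`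
by `qz`, and `e_q(qz) = (1 - z) e_q(z)`; the `-z` part cancels the `μW` term, leaving
`α₁ r q^m U_m`.
-/

open Finset Filter Topology

namespace DSSYK

lemma mapDomain_cons_apply_nil (x : Bool) (v : Sp) :
    Finsupp.mapDomain (List.cons x) v [] = 0 :=
  Finsupp.mapDomain_of_notMem_range _ _ fun ⟨_, h⟩ => List.cons_ne_nil _ _ h

lemma mapDomain_cons_apply_cons (x y : Bool) (v : Sp) (u : Str) :
    Finsupp.mapDomain (List.cons x) v (y :: u) = if y = x then v u else 0 := by
  split_ifs with h
  · exact h ▸ Finsupp.mapDomain_apply List.cons_injective v u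
  · exact Finsupp.mapDomain_of_notMem_range _ _ fun ⟨_, hw⟩ => h (List.head_eq_of_cons_eq hw).symm

lemma annVecR_apply (Q : Bool → Bool → ℂ) (i : Bool) : ∀ w u : Str,
    annVecR Q i w u = ∑ j ∈ range (u.length + 1),
      if u.insertIdx j i = w then ((u.drop j).map (Q i)).prod else 0
  | [], u => by
    refine (Finset.sum_eq_zero fun j hj => if_neg fun h => ?_).symm
    have := congrArg List.length h
    rw [List.length_insertIdx_of_le_length (Nat.lt_succ_iff.mp (mem_range.mp hj))] at this
    simp at this
  | x :: t, [] => by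
    rw [annVecR, Finsupp.add_apply, mapDomain_cons_apply_nil, add_zero]
    simp only [List.length_nil, zero_add, sum_range_one, List.insertIdx_zero, List.drop_nil]
    by_cases hx : x = i
    · by_cases ht : t = [] <;> simp [hx, ht, eq_comm]
    · simp [hx, Ne.symm hx]
  | x :: t, y :: u => by
    rw [annVecR, Finsupp.add_apply, mapDomain_cons_apply_cons, annVecR_apply Q i t u,
      List.length_cons, sum_range_succ' _ (u.length + 1), add_comm]
    simp only [List.insertIdx_succ_cons, List.drop_succ_cons, List.cons.injEq, List.insertIdx_zero,
      List.drop_zero]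
    congr 1
    · by_cases h : y = x <;> simp [h]
    · by_cases hx : x = i
      · by_cases ht : t = y :: u <;> simp [hx, ht, eq_comm]
      · simp [hx, Ne.symm hx]

lemma annR_single (Q : Bool → Bool → ℂ) (i : Bool) (w : Str) :
    annR Q i (Finsupp.single w 1) = annVecR Q i w := by
  simp [annR]

lemma creR_single (i : Bool) (w : Str) :
    creR i (Finsupp.single w 1) = Finsupp.single (w ++ [i]) 1 := by
  simp [creR]

lemma Wgen_single (c₀ c₁ : ℂ) (w : Str) :
    Wgen c₀ c₁ (Finsupp.single w 1) =
      Finsupp.single w (c₀ ^ w.count false * c₁ ^ w.count true) := by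
  simp [Wgen]

def annRTrans (Q : Bool → Bool → ℂ) (i : Bool) (f : Str → ℂ) (u : Str) : ℂ :=
  ∑ j ∈ range (u.length + 1), ((u.drop j).map (Q i)).prod * f (u.insertIdx j i)

lemma hasSum_annR_single_mul (Q : Bool → Bool → ℂ) (i : Bool) (f : Str → ℂ) (u : Str) :
    HasSum (fun w => annR Q i (Finsupp.single w 1) u * f w) (annRTrans Q i f u) := by
  have h : (fun w => annR Q i (Finsupp.single w 1) u * f w) = fun w =>
      ∑ j ∈ range (u.length + 1),
        if w = u.insertIdx j i then ((u.drop j).map (Q i)).prod * f (u.insertIdx j i) else 0 := by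
    funext w
    rw [annR_single, annVecR_apply, sum_mul]
    refine sum_congr rfl fun j _ => ?_
    split_ifs <;> simp_all [eq_comm]
  rw [h]
  exact hasSum_sum fun j _ => hasSum_ite_eq _ _

lemma hasSum_creR_single_mul (i : Bool) (f : Str → ℂ) (u : Str) :
    HasSum (fun w => creR i (Finsupp.single w 1) u * f w)
      (if u.getLast? = some i then f u.dropLast else 0) := by
  simp_rw [creR_single, Finsupp.single_apply, ite_mul, one_mul, zero_mul]
  rcases u.eq_nil_or_concat' with rfl | ⟨v, a, rfl⟩
  · simp
  · by_cases ha : a = i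
    · subst ha
      convert hasSum_ite_eq v (f v) using 2 with w
      · split_ifs with h <;> simp_all
      · simp
    · simp [ha, Ne.symm ha]

lemma hasSum_Wgen_single_mul (c₀ c₁ : ℂ) (f : Str → ℂ) (u : Str) :
    HasSum (fun w => Wgen c₀ c₁ (Finsupp.single w 1) u * f w)
      (c₀ ^ u.count false * c₁ ^ u.count true * f u) := by
  simp_rw [Wgen_single, Finsupp.single_apply, ite_mul, zero_mul]
  convert hasSum_ite_eq u _ using 2 with w
  split_ifs <;> simp_all [eq_comm]

theorem coordAct_annR_add_creR_add_smul_Wgen (Q : Bool → Bool → ℂ) (i : Bool) (c₀ c₁ μ : ℂ)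
    (f : Str → ℂ) (u : Str) :
    coordAct (annR Q i + creR i + μ • Wgen c₀ c₁) f u =
      annRTrans Q i f u + (if u.getLast? = some i then f u.dropLast else 0)
        + μ * (c₀ ^ u.count false * c₁ ^ u.count true * f u) := by
  refine HasSum.tsum_eq ?_
  convert ((hasSum_annR_single_mul Q i f u).add (hasSum_creR_single_mul i f u)).add
    ((hasSum_Wgen_single_mul c₀ c₁ f u).mul_left μ) using 1
  funext w
  simp only [LinearMap.add_apply, LinearMap.smul_apply, Finsupp.add_apply, Finsupp.smul_apply,
    smul_eq_mul]
  ring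

theorem sum_mul_prod_one_sub_range {R : Type*} [CommRing R] (x : ℕ → R) (k : ℕ) :
    ∑ i ∈ range k, x i * ∏ j ∈ range k with i < j, (1 - x j) =
      1 - ∏ i ∈ range k, (1 - x i) := by
  induction k with
  | zero => simp
  | succ k ih =>
    have hlt : ∀ i ∈ range k, ∏ j ∈ range (k + 1) with i < j, (1 - x j)
        = (∏ j ∈ range k with i < j, (1 - x j)) * (1 - x k) := fun i hi => by
      rw [range_add_one, filter_insert, if_pos (mem_range.mp hi),
        prod_insert (by simp), mul_comm]
    have htop : (range (k + 1)).filter (k < ·) = ∅ := by ext; simp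
    rw [sum_range_succ, sum_congr rfl fun i hi => by rw [hlt i hi, ← mul_assoc], ← sum_mul, ih,
      htop, prod_empty, prod_range_succ]
    ring

lemma qPochQC_succ (q : ℝ) (n : ℕ) :
    qPochQC q (n + 1) = qPochQC q n * (1 - (q : ℂ) ^ (n + 1)) := prod_range_succ _ _

lemma qFactC_succ (q : ℝ) (n : ℕ) :
    qFactC q (n + 1) = qFactC q n * qIntC q (n + 1) := prod_range_succ _ _

section QSeries

variable {q : ℝ}

lemma qIntC_eq_geom_sum (hq : q ≠ 1) (n : ℕ) : qIntC q n = ∑ j ∈ range n, (q : ℂ) ^ j := by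
  rw [geom_sum_eq (by exact_mod_cast hq), qIntC, ← neg_div_neg_eq, neg_sub, neg_sub]

lemma one_sub_pow_ne_zero (hq : |q| < 1) {n : ℕ} (hn : n ≠ 0) :
    (1 : ℂ) - (q : ℂ) ^ n ≠ 0 := by
  refine sub_ne_zero.mpr fun h => ?_
  have := congrArg norm h
  rw [norm_one, norm_pow, Complex.norm_real, Real.norm_eq_abs] at this
  exact (pow_lt_one₀ (abs_nonneg q) hq hn).ne this.symm

lemma qIntC_ne_zero (hq : |q| < 1) {n : ℕ} (hn : n ≠ 0) : qIntC q n ≠ 0 :=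
  div_ne_zero (one_sub_pow_ne_zero hq hn) (by simpa using one_sub_pow_ne_zero hq one_ne_zero)

lemma qFactC_ne_zero (hq : |q| < 1) (n : ℕ) : qFactC q n ≠ 0 :=
  prod_ne_zero_iff.mpr fun _ _ => qIntC_ne_zero hq (Nat.succ_ne_zero _)

lemma qPochQC_ne_zero (hq : |q| < 1) (n : ℕ) : qPochQC q n ≠ 0 :=
  prod_ne_zero_iff.mpr fun _ _ => one_sub_pow_ne_zero hq (Nat.succ_ne_zero _)

lemma multipliable_one_sub_mul_pow (hq : |q| < 1) (x : ℂ) :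
    Multipliable fun j : ℕ => 1 - x * (q : ℂ) ^ j := by
  simpa [sub_eq_add_neg] using
    multipliable_one_add_of_summable (f := fun j : ℕ => -(x * (q : ℂ) ^ j))
      (by simpa [norm_mul] using (summable_geometric_of_lt_one (abs_nonneg q) hq).mul_left ‖x‖)

lemma qPochInfC_eq_one_sub_mul (hq : |q| < 1) (x : ℂ) :
    qPochInfC q x = (1 - x) * qPochInfC q (q * x) := by
  have hshift : (fun j : ℕ => 1 - x * (q : ℂ) ^ (j + 1)) = fun j => 1 - q * x * (q : ℂ) ^ j :=
    funext fun j => by ring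
  rw [qPochInfC, tprod_eq_zero_mul' (hshift ▸ multipliable_one_sub_mul_pow hq _), hshift,
    pow_zero, mul_one, qPochInfC]

lemma inv_qPochInfC_mul (hq : |q| < 1) {x : ℂ} (hx : x ≠ 1) :
    (qPochInfC q (q * x))⁻¹ = (1 - x) * (qPochInfC q x)⁻¹ := by
  rw [qPochInfC_eq_one_sub_mul hq x, mul_inv, ← mul_assoc,
    mul_inv_cancel₀ (sub_ne_zero.mpr hx.symm), one_mul]

noncomputable def qExpC (q : ℝ) (z : ℂ) : ℂ := ∑' n : ℕ, z ^ n / qPochQC q n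

lemma summable_norm_qExpC (hq : |q| < 1) {z : ℂ} (hz : ‖z‖ < 1) :
    Summable fun n : ℕ => ‖z ^ n / qPochQC q n‖ := by
  rcases eq_or_ne z 0 with rfl | hz0
  · exact (summable_nat_add_iff 1).mp (by simp)
  refine summable_of_ratio_test_tendsto_lt_one hz
    (Eventually.of_forall fun n => by simp [hz0, qPochQC_ne_zero hq]) ?_
  have hpow : Tendsto (fun n : ℕ => (q : ℂ) ^ (n + 1)) atTop (𝓝 0) :=
    (tendsto_pow_atTop_nhds_zero_of_norm_lt_one (by simpa using hq)).comp
      (tendsto_add_atTop_nat 1)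
  have hlim : Tendsto (fun n : ℕ => ‖z‖ / ‖1 - (q : ℂ) ^ (n + 1)‖) atTop (𝓝 ‖z‖) := by
    simpa [Pi.div_def] using tendsto_const_nhds.div (tendsto_const_nhds.sub hpow).norm
      (by norm_num : ‖(1 : ℂ) - 0‖ ≠ 0)
  refine hlim.congr fun n => ?_
  have hP := norm_ne_zero_iff.mpr (qPochQC_ne_zero hq n)
  simp only [norm_norm, norm_div, norm_pow, qPochQC_succ, norm_mul]
  field_simp
  ring

lemma summable_qExpC (hq : |q| < 1) {z : ℂ} (hz : ‖z‖ < 1) :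
    Summable fun n : ℕ => z ^ n / qPochQC q n :=
  (summable_norm_qExpC hq hz).of_norm

theorem qExpC_q_mul (hq : |q| < 1) {z : ℂ} (hz : ‖z‖ < 1) :
    qExpC q (q * z) = (1 - z) * qExpC q z := by
  have hqz : ‖(q : ℂ) * z‖ < 1 := by
    rw [norm_mul, Complex.norm_real, Real.norm_eq_abs]
    nlinarith [abs_nonneg q, norm_nonneg z]
  have hS := summable_qExpC hq hz
  have hdiff := (summable_qExpC hq hqz).hasSum.sub hS.hasSum
  rw [← hasSum_nat_add_iff' 1] at hdiff
  have hshift : ∀ n : ℕ,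
      ((q : ℂ) * z) ^ (n + 1) / qPochQC q (n + 1) - z ^ (n + 1) / qPochQC q (n + 1)
        = -z * (z ^ n / qPochQC q n) := fun n => by
    have := one_sub_pow_ne_zero hq (Nat.succ_ne_zero n)
    rw [qPochQC_succ]
    field_simp
    ring
  simp only [hshift, sum_range_one, pow_zero, sub_self, sub_zero] at hdiff
  have := hdiff.unique (hS.hasSum.mul_left (-z))
  rw [qExpC, qExpC]
  linear_combination this

end QSeries

lemma replicate_false_append_true_inj {a b : ℕ} {s t : Str}
    (h : List.replicate a false ++ true :: s = List.replicate b false ++ true :: t) :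
    a = b ∧ s = t := by
  induction a generalizing b with
  | zero => cases b <;> simp_all [List.replicate_succ]
  | succ a ih =>
    cases b with
    | zero => simp [List.replicate_succ] at h
    | succ b => simpa using ih (by simpa [List.replicate_succ] using h)

lemma exists_replicate_false_append_true {u : Str} (hu : true ∈ u) :
    ∃ a v, u = List.replicate a false ++ true :: v := by
  induction u with
  | nil => simp at hu
  | cons x t ih =>
    cases x with
    | true => exact ⟨0, t, rfl⟩
    | false =>
      obtain ⟨a, v, rfl⟩ := ih (by simpa using hu)
      exact ⟨a + 1, v, rfl⟩

section BraneString

variable (ns : ℕ → ℕ)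

lemma braneString_succ_tail (m : ℕ) :
    ∀ k, braneString ns (m + 1) k = braneString ns m k ++ [false]
  | 0 => List.replicate_succ' ..
  | k + 1 => by simp [braneString, braneString_succ_tail m k]

lemma count_true_braneString (m : ℕ) : ∀ k, (braneString ns m k).count true = k
  | 0 => by simp [braneString, List.count_replicate]
  | k + 1 => by simp [braneString, List.count_replicate, count_true_braneString m k]

lemma count_false_braneString (m : ℕ) :
    ∀ k, (braneString ns m k).count false = (∑ i ∈ Icc 1 k, ns i) + m
  | 0 => by simp [braneString]
  | k + 1 => by
    simp only [braneString, List.count_append, List.count_replicate_self,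
      List.count_cons_of_ne (by decide : true ≠ false), count_false_braneString m k,
      sum_Icc_succ_top (Nat.le_add_left 1 k)]
    ring

lemma getLast?_braneString_zero_succ : ∀ k, (braneString ns 0 (k + 1)).getLast? = some true
  | 0 => by simp [braneString]
  | k + 1 => by
    rw [braneString, List.append_cons, List.getLast?_append, getLast?_braneString_zero_succ k]
    rfl

lemma braneString_congr {ns' : ℕ → ℕ} (m : ℕ) :
    ∀ k, (∀ i ∈ Icc 1 k, ns i = ns' i) → braneString ns m k = braneString ns' m k
  | 0, _ => rfl
  | k + 1, h => by
    rw [braneString, braneString, h (k + 1) (by simp),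
      braneString_congr m k fun i hi => h i (by simp only [mem_Icc] at hi ⊢; omega)]

lemma braneString_inj {ns' : ℕ → ℕ} {m m' : ℕ} :
    ∀ {k}, braneString ns m k = braneString ns' m' k → m = m' ∧ ∀ i ∈ Icc 1 k, ns i = ns' i
  | 0, h => ⟨by simpa [braneString] using congrArg List.length h, by simp⟩
  | k + 1, h => by
    obtain ⟨htop, hrest⟩ := replicate_false_append_true_inj h
    obtain ⟨hm, hns⟩ := braneString_inj hrest
    refine ⟨hm, fun i hi => ?_⟩
    rcases eq_or_ne i (k + 1) with rfl | hik
    · exact htop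
    · exact hns i (by simp only [mem_Icc] at hi ⊢; omega)

lemma braneString_add_single_of_lt {j k : ℕ} (hkj : k < j) (c m : ℕ) :
    braneString (ns + Pi.single j c) m k = braneString ns m k :=
  braneString_congr _ m k fun i hi => by
    rw [mem_Icc] at hi
    simp [show i ≠ j by omega]

end BraneString

lemma exists_braneString_of_count_true :
    ∀ {k : ℕ} {u : Str}, u.count true = k → ∃ ns m, u = braneString ns m k
  | 0, u, hu => ⟨0, u.length, List.eq_replicate_iff.mpr ⟨rfl, fun b hb => by
      cases b
      · rfl
      · exact absurd hb (List.count_eq_zero.mp hu)⟩⟩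
  | k + 1, u, hu => by
    obtain ⟨a, v, rfl⟩ :=
      exists_replicate_false_append_true (u := u) (List.count_pos_iff.mp (by omega))
    obtain ⟨ns, m, rfl⟩ :=
      exists_braneString_of_count_true (k := k) (by simpa [List.count_replicate] using hu)
    have hlow : ∀ i ∈ Icc 1 k, ns i = Function.update ns (k + 1) a i := fun i hi =>
      (Function.update_of_ne (show i ≠ k + 1 by rw [mem_Icc] at hi; omega) _ _).symm
    exact ⟨Function.update ns (k + 1) a, m, by
      rw [braneString, Function.update_self, braneString_congr ns m k hlow]⟩

lemma insertIdx_length_add_append {α : Type*} (a : α) (s : List α) (j : ℕ) :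
    ∀ l : List α, (l ++ s).insertIdx (l.length + j) a = l ++ s.insertIdx j a
  | [] => by simp
  | x :: l => by
    rw [List.cons_append, List.length_cons, Nat.add_right_comm, List.insertIdx_succ_cons,
      insertIdx_length_add_append a s j l, List.cons_append]

lemma insertIdx_replicate_append {α : Type*} (a : α) (s : List α) :
    ∀ {n j : ℕ}, j ≤ n → (List.replicate n a ++ s).insertIdx j a = List.replicate (n + 1) a ++ s
  | _, 0, _ => by simp [List.replicate_succ]
  | n + 1, j + 1, h => by
    rw [List.replicate_succ, List.cons_append, List.insertIdx_succ_cons,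
      insertIdx_replicate_append a s (by omega), List.replicate_succ (n := n + 1),
      List.cons_append]

/-- Inserting `i` anywhere in a leading block `iⁿ` gives the same string, so these `n + 1`
insertions combine into one term with weight `Σⱼ (Q i i)ʲ`. -/
lemma annRTrans_replicate_append (Q : Bool → Bool → ℂ) (i : Bool) (f : Str → ℂ) (n : ℕ)
    (s : Str) :
    annRTrans Q i f (List.replicate n i ++ s) =
      (∑ j ∈ range (n + 1), Q i i ^ j) * (s.map (Q i)).prod * f (List.replicate (n + 1) i ++ s)
        + ∑ j ∈ range s.length,
            ((s.drop (j + 1)).map (Q i)).prod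
              * f (List.replicate n i ++ s.insertIdx (j + 1) i) := by
  rw [annRTrans, List.length_append, List.length_replicate, add_right_comm, sum_range_add]
  congr 1
  · rw [← sum_range_reflect (Q i i ^ ·), sum_mul, sum_mul]
    refine sum_congr rfl fun j hj => ?_
    have hj : j ≤ n := Nat.lt_succ_iff.mp (mem_range.mp hj)
    rw [List.drop_append_of_le_length (by simpa using hj), List.drop_replicate,
      insertIdx_replicate_append i s hj, List.map_append, List.prod_append, List.map_replicate,
      List.prod_replicate, Nat.add_sub_cancel]
  · refine sum_congr rfl fun j _ => ?_
    rw [show n + 1 + j = (List.replicate n i).length + (j + 1) by rw [List.length_replicate]; omega,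
      List.drop_length_add_append, insertIdx_length_add_append]

@[simp] lemma Qmat_false_false (q qm r : ℝ) : Qmat q qm r false false = q := rfl

@[simp] lemma Qmat_false_true (q qm r : ℝ) : Qmat q qm r false true = r := rfl

lemma prod_map_Qmat_false (q qm r : ℝ) :
    ∀ l : Str,
      (l.map (Qmat q qm r false)).prod = (q : ℂ) ^ l.count false * (r : ℂ) ^ l.count true
  | [] => by simp
  | x :: l => by
    rw [List.map_cons, List.prod_cons, prod_map_Qmat_false q qm r l]
    cases x <;> simp only [Qmat_false_false, Qmat_false_true, List.count_cons_self,
      List.count_cons_of_ne (by decide : true ≠ false),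
      List.count_cons_of_ne (by decide : false ≠ true), pow_succ] <;> ring

theorem annRTrans_braneString {q : ℝ} (hq : q ≠ 1) (qm r : ℝ) (ns : ℕ → ℕ) (m : ℕ) :
    ∀ (k : ℕ) (f : Str → ℂ), annRTrans (Qmat q qm r) false f (braneString ns m k) =
      ∑ i ∈ range k, qIntC q (ns (i + 1) + 1) * (q : ℂ) ^ (m + ∑ j ∈ Icc 1 i, ns j)
          * (r : ℂ) ^ (i + 1) * f (braneString (ns + Pi.single (i + 1) 1) m k)
        + qIntC q (m + 1) * f (braneString ns (m + 1) k)
  | 0, f => by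
    simpa [braneString, ← qIntC_eq_geom_sum hq] using
      annRTrans_replicate_append (Qmat q qm r) false f m []
  | k + 1, f => by
    have hlow : ∀ i ∈ range k, f (braneString (ns + Pi.single (i + 1) 1) m (k + 1)) = f
        (List.replicate (ns (k + 1)) false ++ true :: braneString (ns + Pi.single (i + 1) 1) m k) :=
      fun i hi => by simp [braneString, (mem_range.mp hi).ne']
    have htop : braneString (ns + Pi.single (k + 1) 1) m (k + 1) =
        List.replicate (ns (k + 1) + 1) false ++ true :: braneString ns m k := by
      simp [braneString, braneString_add_single_of_lt ns (Nat.lt_succ_self k)]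
    have hsplit : annRTrans (Qmat q qm r) false f (braneString ns m (k + 1)) =
        qIntC q (ns (k + 1) + 1)
            * ((r : ℂ) * ((q : ℂ) ^ (∑ j ∈ Icc 1 k, ns j + m) * (r : ℂ) ^ k))
            * f (List.replicate (ns (k + 1) + 1) false ++ true :: braneString ns m k)
          + annRTrans (Qmat q qm r) false
              (fun w => f (List.replicate (ns (k + 1)) false ++ true :: w))
              (braneString ns m k) := by
      rw [braneString, annRTrans_replicate_append, List.map_cons, List.prod_cons,
        prod_map_Qmat_false, count_false_braneString, count_true_braneString, Qmat_false_false,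
        Qmat_false_true, ← qIntC_eq_geom_sum hq]
      rfl
    rw [hsplit, annRTrans_braneString hq qm r ns m k, sum_range_succ, htop, ← add_assoc,
      add_comm (qIntC q _ * _ * _) (∑ i ∈ range k, _)]
    congr 2
    · exact sum_congr rfl fun i hi => by rw [hlow i hi]
    · ring

section BraneCoeff

variable (q r : ℝ) (β : ℕ → ℂ) (k : ℕ) (ns : ℕ → ℕ)

noncomputable def braneRatio (q r : ℝ) (β : ℕ → ℂ) (ns : ℕ → ℕ) (j : ℕ) : ℂ :=
  β (j + 1) * (r : ℂ) ^ j * (q : ℂ) ^ (∑ l ∈ Icc 1 j, ns l) / β 1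

lemma braneCoeff_eq_prod_mul_prod : braneCoeff q r β k ns =
    (∏ i ∈ Icc 1 k, β i ^ ns i / qFactC q (ns i)) *
      ∏ j ∈ Icc 1 (k - 1), (qPochInfC q (braneRatio q r β ns j))⁻¹ := rfl

lemma braneCoeff_congr {ns' : ℕ → ℕ} (h : ∀ i ∈ Icc 1 k, ns i = ns' i) :
    braneCoeff q r β k ns = braneCoeff q r β k ns' := by
  rw [braneCoeff_eq_prod_mul_prod, braneCoeff_eq_prod_mul_prod]
  congr 1
  · exact prod_congr rfl fun i hi => by rw [h i hi]
  · refine prod_congr rfl fun j hj => ?_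
    rw [braneRatio, braneRatio,
      sum_congr rfl fun l hl => h l (by simp only [mem_Icc] at hj hl ⊢; omega)]

lemma braneState_braneString (m m' : ℕ) :
    braneState q r β k m (braneString ns m' k) =
      if m' = m then braneCoeff q r β k ns else 0 := by
  rw [braneState]
  split_ifs with h hm hm
  · exact braneCoeff_congr q r β k _ fun i hi => ((braneString_inj ns h.choose_spec).2 i hi).symm
  · exact absurd (braneString_inj ns h.choose_spec).1 hm
  · exact absurd ⟨ns, hm ▸ rfl⟩ h
  · rfl

lemma braneState_of_count_true_ne (m : ℕ) {w : Str} (hw : w.count true ≠ k) :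
    braneState q r β k m w = 0 :=
  dif_neg fun ⟨ns, hns⟩ => hw (hns ▸ count_true_braneString ns m k)

lemma braneCoeff_const_mul {c : ℂ} (hc : c ≠ 0) :
    braneCoeff q r (fun i => c * β i) k ns =
      c ^ (∑ i ∈ Icc 1 k, ns i) * braneCoeff q r β k ns := by
  have hratio : ∀ j, braneRatio q r (fun i => c * β i) ns j = braneRatio q r β ns j := fun j => by
    simp only [braneRatio, mul_assoc]
    exact mul_div_mul_left _ _ hc
  simp only [braneCoeff_eq_prod_mul_prod, hratio, mul_pow, mul_div_assoc, prod_mul_distrib,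
    prod_pow_eq_pow_sum]
  ring

lemma braneRatio_add_single {i : ℕ} (hi : 1 ≤ i) (j : ℕ) :
    braneRatio q r β (ns + Pi.single i 1) j =
      (if i ≤ j then (q : ℂ) else 1) * braneRatio q r β ns j := by
  simp only [braneRatio, Pi.add_apply, sum_add_distrib, sum_pi_single', pow_add]
  split_ifs with h₁ h₂ h₂ <;> rw [mem_Icc] at h₁ <;> first | omega | ring

lemma norm_braneRatio_lt_one (hq : |q| ≤ 1) (hβ1 : β 1 ≠ 0) {j : ℕ}
    (h : ‖β (j + 1)‖ * |r| ^ j < ‖β 1‖) : ‖braneRatio q r β ns j‖ < 1 := by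
  rw [braneRatio, norm_div, div_lt_one (norm_pos_iff.mpr hβ1), norm_mul, norm_mul, norm_pow,
    norm_pow, Complex.norm_real, Complex.norm_real, Real.norm_eq_abs, Real.norm_eq_abs]
  exact (mul_le_of_le_one_right (by positivity) (pow_le_one₀ (abs_nonneg q) hq)).trans_lt h

theorem braneCoeff_add_single (hq : |q| < 1)
    (hx : ∀ j ∈ Icc 1 (k - 1), braneRatio q r β ns j ≠ 1) {i : ℕ} (hi : i < k) :
    qIntC q (ns (i + 1) + 1) * braneCoeff q r β k (ns + Pi.single (i + 1) 1) =
      β (i + 1) * (∏ j ∈ range k with i < j, (1 - braneRatio q r β ns j)) *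
        braneCoeff q r β k ns := by
  have hmem : i + 1 ∈ Icc 1 k := mem_Icc.mpr ⟨by omega, by omega⟩
  have hfac :
      qIntC q (ns (i + 1) + 1) * (β (i + 1) ^ (ns (i + 1) + 1) / qFactC q (ns (i + 1) + 1))
        = β (i + 1) * (β (i + 1) ^ ns (i + 1) / qFactC q (ns (i + 1))) := by
    have := qFactC_ne_zero hq (ns (i + 1))
    have := qIntC_ne_zero hq (Nat.succ_ne_zero (ns (i + 1)))
    rw [qFactC_succ, pow_succ]
    field_simp
  have hA : qIntC q (ns (i + 1) + 1) *
      ∏ l ∈ Icc 1 k, β l ^ (ns + Pi.single (i + 1) 1 : ℕ → ℕ) l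
        / qFactC q ((ns + Pi.single (i + 1) 1 : ℕ → ℕ) l)
      = β (i + 1) * ∏ l ∈ Icc 1 k, β l ^ ns l / qFactC q (ns l) := by
    rw [← mul_prod_erase _ _ hmem, ← mul_prod_erase _ _ hmem, ← mul_assoc, ← mul_assoc]
    congr 1
    · simpa using hfac
    · exact prod_congr rfl fun l hl => by simp [ne_of_mem_erase hl]
  have hB :
      ∏ j ∈ Icc 1 (k - 1), (qPochInfC q (braneRatio q r β (ns + Pi.single (i + 1) 1) j))⁻¹
        = (∏ j ∈ range k with i < j, (1 - braneRatio q r β ns j)) *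
          ∏ j ∈ Icc 1 (k - 1), (qPochInfC q (braneRatio q r β ns j))⁻¹ := by
    have hfilter : (range k).filter (i < ·) = (Icc 1 (k - 1)).filter (i + 1 ≤ ·) := by
      ext j; simp only [mem_filter, mem_range, mem_Icc]; omega
    rw [hfilter, prod_filter, ← prod_mul_distrib]
    refine prod_congr rfl fun j hj => ?_
    rw [braneRatio_add_single q r β ns (Nat.succ_pos i)]
    split_ifs
    · exact inv_qPochInfC_mul hq (hx j hj)
    · rw [one_mul, one_mul]
  rw [braneCoeff_eq_prod_mul_prod, braneCoeff_eq_prod_mul_prod, ← mul_assoc, hA, hB]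
  ring

end BraneCoeff

lemma coordAct_eq_zero_of_count_true_ne (Q : Bool → Bool → ℂ) (c₀ c₁ μ : ℂ) {k : ℕ}
    {f : Str → ℂ} (hf : ∀ w : Str, w.count true ≠ k → f w = 0) {u : Str}
    (hu : u.count true ≠ k) :
    coordAct (annR Q false + creR false + μ • Wgen c₀ c₁) f u = 0 := by
  have hins : ∀ j ∈ range (u.length + 1), f (u.insertIdx j false) = 0 := fun j hj => hf _ <| by
    rwa [(List.perm_insertIdx false u (Nat.lt_succ_iff.mp (mem_range.mp hj))).count_eq,
      List.count_cons_of_ne (by decide)]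
  rw [coordAct_annR_add_creR_add_smul_Wgen, annRTrans, hf u hu,
    sum_eq_zero fun j hj => by rw [hins j hj, mul_zero]]
  rcases u.eq_nil_or_concat' with rfl | ⟨v, a, rfl⟩
  · simp
  · cases a
    · simp [hf v (by simpa using hu)]
    · simp

theorem coordAct_braneString {q : ℝ} (hq : q ≠ 1) (qm r : ℝ) (μ : ℂ) (f : Str → ℂ)
    (ns : ℕ → ℕ) (m : ℕ) {k : ℕ} (hk : k ≠ 0) :
    coordAct (annR (Qmat q qm r) false + creR false + μ • Wop q r) f (braneString ns m k) =
      ∑ i ∈ range k, qIntC q (ns (i + 1) + 1) * (q : ℂ) ^ (m + ∑ j ∈ Icc 1 i, ns j)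
          * (r : ℂ) ^ (i + 1) * f (braneString (ns + Pi.single (i + 1) 1) m k)
        + qIntC q (m + 1) * f (braneString ns (m + 1) k)
        + (if m = 0 then 0 else f (braneString ns (m - 1) k))
        + μ * ((q : ℂ) ^ (∑ i ∈ Icc 1 k, ns i + m) * (r : ℂ) ^ k * f (braneString ns m k)) := by
  rw [Wop, coordAct_annR_add_creR_add_smul_Wgen, annRTrans_braneString hq,
    count_false_braneString, count_true_braneString]
  congr 2
  cases m with
  | zero =>
    obtain ⟨k, rfl⟩ := Nat.exists_eq_succ_of_ne_zero hk
    simp [getLast?_braneString_zero_succ]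
  | succ m => simp [braneString_succ_tail]

section Dressed

variable (q r : ℝ) (α : ℕ → ℂ) (k : ℕ) (μ : ℂ)

noncomputable def dressedTerm (m : ℕ) (w : Str) (n : ℕ) : ℂ :=
  ((μ * (r : ℂ) ^ (k - 1) / α 1) ^ n / qPochQC q n)
    * braneState q r (fun i => (q : ℂ) ^ n * α i) k m w

noncomputable def dressedState (m : ℕ) (w : Str) : ℂ := ∑' n : ℕ, dressedTerm q r α k μ m w n

noncomputable def dressedCoeff (ns : ℕ → ℕ) : ℂ :=
  qExpC q (μ * (r : ℂ) ^ (k - 1) / α 1 * (q : ℂ) ^ (∑ i ∈ Icc 1 k, ns i))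
    * braneCoeff q r α k ns

variable {q r α k μ}

lemma norm_mul_pow_lt_one {z : ℂ} (hq : |q| < 1) (hz : ‖z‖ < 1) (S : ℕ) :
    ‖z * (q : ℂ) ^ S‖ < 1 := by
  rw [norm_mul, norm_pow, Complex.norm_real, Real.norm_eq_abs]
  exact mul_lt_one_of_nonneg_of_lt_one_left (norm_nonneg z) hz
    (pow_le_one₀ (abs_nonneg q) hq.le)

lemma dressedTerm_braneString (hq0 : q ≠ 0) (ns : ℕ → ℕ) (m m' n : ℕ) :
    dressedTerm q r α k μ m (braneString ns m' k) n =
      if m' = m then (μ * (r : ℂ) ^ (k - 1) / α 1 * (q : ℂ) ^ (∑ i ∈ Icc 1 k, ns i)) ^ n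
        / qPochQC q n * braneCoeff q r α k ns else 0 := by
  rw [dressedTerm, braneState_braneString]
  split_ifs
  · rw [braneCoeff_const_mul _ _ _ _ _ (pow_ne_zero n (Complex.ofReal_ne_zero.mpr hq0)),
      ← pow_mul, mul_comm n, pow_mul, mul_pow]
    ring
  · rw [mul_zero]

lemma dressedTerm_of_count_true_ne (m : ℕ) {w : Str} (hw : w.count true ≠ k) (n : ℕ) :
    dressedTerm q r α k μ m w n = 0 := by
  rw [dressedTerm, braneState_of_count_true_ne _ _ _ _ _ hw, mul_zero]

theorem summable_norm_dressedTerm (hq : |q| < 1) (hq0 : q ≠ 0)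
    (hy : ‖μ * (r : ℂ) ^ (k - 1) / α 1‖ < 1) (m : ℕ) (w : Str) :
    Summable fun n => ‖dressedTerm q r α k μ m w n‖ := by
  by_cases hw : w.count true = k
  · obtain ⟨ns, m', rfl⟩ := exists_braneString_of_count_true hw
    simp_rw [dressedTerm_braneString hq0]
    split_ifs
    · simpa only [norm_mul] using
        (summable_norm_qExpC hq (norm_mul_pow_lt_one hq hy _)).mul_right ‖braneCoeff q r α k ns‖
    · simp
  · simp [dressedTerm_of_count_true_ne m hw]

lemma dressedState_braneString (hq0 : q ≠ 0) (ns : ℕ → ℕ) (m m' : ℕ) :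
    dressedState q r α k μ m (braneString ns m' k) =
      if m' = m then dressedCoeff q r α k μ ns else 0 := by
  simp_rw [dressedState, dressedTerm_braneString hq0]
  split_ifs
  · rw [tsum_mul_right, dressedCoeff, qExpC]
  · simp

lemma dressedState_of_count_true_ne (m : ℕ) {w : Str} (hw : w.count true ≠ k) :
    dressedState q r α k μ m w = 0 := by
  simp [dressedState, dressedTerm_of_count_true_ne m hw]


theorem dressedCoeff_screening (hq : |q| < 1) (hα1 : α 1 ≠ 0) (hk : k ≠ 0)
    (hy : ‖μ * (r : ℂ) ^ (k - 1) / α 1‖ < 1) (ns : ℕ → ℕ)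
    (hx : ∀ j ∈ Icc 1 (k - 1), braneRatio q r α ns j ≠ 1) (m : ℕ) :
    ∑ i ∈ range k, qIntC q (ns (i + 1) + 1) * (q : ℂ) ^ (m + ∑ j ∈ Icc 1 i, ns j)
        * (r : ℂ) ^ (i + 1) * dressedCoeff q r α k μ (ns + Pi.single (i + 1) 1)
      + μ * ((q : ℂ) ^ (∑ i ∈ Icc 1 k, ns i + m) * (r : ℂ) ^ k * dressedCoeff q r α k μ ns)
      = α 1 * r * (q : ℂ) ^ m * dressedCoeff q r α k μ ns := by
  set S := ∑ i ∈ Icc 1 k, ns i with hS_def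
  set z := μ * (r : ℂ) ^ (k - 1) / α 1 * (q : ℂ) ^ S with hz
  have hterm : ∀ i ∈ range k, qIntC q (ns (i + 1) + 1) * (q : ℂ) ^ (m + ∑ j ∈ Icc 1 i, ns j)
      * (r : ℂ) ^ (i + 1) * dressedCoeff q r α k μ (ns + Pi.single (i + 1) 1)
      = α 1 * r * (q : ℂ) ^ m * qExpC q (q * z) * braneCoeff q r α k ns * (braneRatio q r α ns i
          * ∏ j ∈ range k with i < j, (1 - braneRatio q r α ns j)) := fun i hi => by
    have hS : ∑ l ∈ Icc 1 k, (ns + Pi.single (i + 1) 1 : ℕ → ℕ) l = S + 1 := by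
      simp only [Pi.add_apply, sum_add_distrib, sum_pi_single']
      rw [if_pos (mem_Icc.mpr ⟨by omega, mem_range.mp hi⟩)]
    have hstep := braneCoeff_add_single q r α k ns hq hx (mem_range.mp hi)
    rw [dressedCoeff, hS, show μ * (r : ℂ) ^ (k - 1) / α 1 * (q : ℂ) ^ (S + 1) = q * z by
      rw [hz]; ring, braneRatio, pow_add]
    field_simp
    linear_combination
      ((q : ℂ) ^ m * (q : ℂ) ^ (∑ j ∈ Icc 1 i, ns j) * (r : ℂ) ^ i * r * qExpC q (q * z)) * hstep
  have hx0 : braneRatio q r α ns 0 = 1 := by simp [braneRatio, hα1]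
  have hrk : (r : ℂ) ^ k = r ^ (k - 1) * r := by
    rw [← pow_succ, Nat.sub_add_cancel (Nat.one_le_iff_ne_zero.mpr hk)]
  rw [sum_congr rfl hterm, ← mul_sum, sum_mul_prod_one_sub_range,
    prod_eq_zero (mem_range.mpr (Nat.pos_of_ne_zero hk)) (by rw [hx0, sub_self]), sub_zero,
    mul_one, qExpC_q_mul hq (norm_mul_pow_lt_one hq hy S), dressedCoeff, ← hS_def, hrk, pow_add]
  field_simp
  ring

theorem coordAct_dressedState (hq : |q| < 1) (hq0 : q ≠ 0) (hα1 : α 1 ≠ 0) (hk : k ≠ 0)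
    (hy : ‖μ * (r : ℂ) ^ (k - 1) / α 1‖ < 1)
    (hx : ∀ ns : ℕ → ℕ, ∀ j ∈ Icc 1 (k - 1), braneRatio q r α ns j ≠ 1) (qm : ℝ) (m : ℕ)
    (w : Str) :
    coordAct (annR (Qmat q qm r) false + creR false + μ • Wop q r) (dressedState q r α k μ m) w
      = qIntC q m * dressedState q r α k μ (m - 1) w
        + α 1 * r * (q : ℂ) ^ m * dressedState q r α k μ m w
        + dressedState q r α k μ (m + 1) w := by
  by_cases hw : w.count true = k
  swap
  · rw [Wop, coordAct_eq_zero_of_count_true_ne _ _ _ _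
      (fun w hw => dressedState_of_count_true_ne m hw) hw]
    simp [dressedState_of_count_true_ne _ hw]
  obtain ⟨ns, m', rfl⟩ := exists_braneString_of_count_true hw
  have hq1 : q ≠ 1 := by rintro rfl; simp at hq
  rw [coordAct_braneString hq1 qm r μ _ ns m' hk]
  simp only [dressedState_braneString hq0]
  obtain rfl | rfl | rfl | ⟨h₀, h₁, h₂⟩ :
      m' = m ∨ m' = m + 1 ∨ m' + 1 = m ∨ (m' ≠ m ∧ m' ≠ m + 1 ∧ m' + 1 ≠ m) := by omega
  · have hlower : qIntC q m' * (if m' = m' - 1 then dressedCoeff q r α k μ ns else 0) = 0 := by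
      rcases m' with _ | m' <;> simp [qIntC]
    have hupper : (if m' = 0 then 0 else if m' - 1 = m' then dressedCoeff q r α k μ ns else 0)
        = 0 := by split_ifs <;> first | rfl | omega
    rw [hlower, hupper]
    simp only [↓reduceIte, show m' + 1 ≠ m' by omega, show m' ≠ m' + 1 by omega]
    linear_combination dressedCoeff_screening hq hα1 hk hy ns (hx ns) m'
  · simp [show m + 1 + 1 ≠ m by omega, show m + 1 ≠ m - 1 by omega]
  · simp [show m' ≠ m' + 1 + 1 by omega]
  · simp only [h₀, h₁, h₂, ↓reduceIte, mul_zero, sum_const_zero, add_zero, zero_add, mul_ite]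
    split_ifs <;> first | rfl | omega

end Dressed

end DSSYK

open DSSYK in
/-- the EoW brane is completely screened by dressed matter chords.  With
`U_m = Σ_n ((μ·r^{k−1}/α₁)ⁿ/(q;q)_n) · V_m^{(qⁿα_k,…,qⁿα₁)}` (the series converging
absolutely at every string), the EoW-brane Hamiltonian `H̃_{R,0} = a_{R,0} + a†_{R,0} + μW`
acts coordinatewise as `H̃_{R,0} U_m = [m]_q·U_{m−1} + α₁·r·q^m·U_m + U_{m+1}`,
i.e. as if the brane tension were `α₁·r`. -/
theorem stmt_18 (q qm r : ℝ) (hq0 : 0 < q) (hq1 : q < 1)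
    (k : ℕ) (hk : 1 ≤ k) (α : ℕ → ℂ)
    (hα : ∀ i ∈ Finset.Icc 1 k, α i ≠ 0)
    (hscreen : ∀ i : ℕ, 1 ≤ i → i ≤ k - 1 →
      ‖α (i + 1)‖ * |r| ^ i < ‖α 1‖)
    (μ : ℂ) (hμ : ‖μ‖ * |r| ^ (k - 1) < ‖α 1‖)
    (U : ℕ → Str → ℂ)
    (hU : ∀ (m : ℕ) (w : Str), U m w = ∑' n : ℕ,
      ((μ * (r : ℂ) ^ (k - 1) / α 1) ^ n / qPochQC q n)
        * braneState q r (fun i => (q : ℂ) ^ n * α i) k m w) :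
    (∀ (m : ℕ) (w : Str), Summable fun n : ℕ =>
      ‖((μ * (r : ℂ) ^ (k - 1) / α 1) ^ n / qPochQC q n)
        * braneState q r (fun i => (q : ℂ) ^ n * α i) k m w‖) ∧
    (∀ (m : ℕ) (w : Str),
      coordAct (annR (Qmat q qm r) false + creR false + μ • Wop q r) (U m) w
        = qIntC q m * U (m - 1) w
          + α 1 * (r : ℂ) * (q : ℂ) ^ m * U m w + U (m + 1) w) := by
  have hq : |q| < 1 := by rwa [abs_of_pos hq0]
  have hα1 : α 1 ≠ 0 := hα 1 (Finset.mem_Icc.mpr ⟨le_rfl, hk⟩)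
  have hy : ‖μ * (r : ℂ) ^ (k - 1) / α 1‖ < 1 := by
    rwa [norm_div, norm_mul, norm_pow, Complex.norm_real, Real.norm_eq_abs,
      div_lt_one (norm_pos_iff.mpr hα1)]
  have hx : ∀ ns : ℕ → ℕ, ∀ j ∈ Finset.Icc 1 (k - 1), braneRatio q r α ns j ≠ 1 :=
    fun ns j hj h => by
      obtain ⟨hj1, hj2⟩ := Finset.mem_Icc.mp hj
      simpa [h] using norm_braneRatio_lt_one q r α ns hq.le hα1 (hscreen j hj1 hj2)
  obtain rfl : U = dressedState q r α k μ := funext fun m => funext (hU m)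
  exact ⟨summable_norm_dressedTerm hq hq0.ne' hy,
    coordAct_dressedState hq hq0.ne' hα1 (by omega) hy hx qm⟩
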